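/- Let M be a left A-module with a connection ∇ (not necessarily flat) with respect to the universal differential calculus on A, and define m·a := a m − Σ m_A a m_M. Then this operation is unital and commutes with the left action: m·1 = m and (a m)·b = a (m·b) for all a, b ∈ A and m ∈ M. (Flatness is not needed; it is only required for associativity of the induced right action.) -/

import Mathlib

open TensorProduct

variable (K A M : Type*) [Field K] [Ring A] [Algebra K A]
  [AddCommGroup M] [Module K M] [Module A M] [IsScalarTower K A M]

/-- The action map `A ⊗ M → M`, `a ⊗ m ↦ a • m`. -/
noncomputable def actMap : A ⊗[K] M →ₗ[K] M :=
  TensorProduct.lift (LinearMap.mk₂ K (fun a m => a • m)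
    (fun a b m => add_smul a b m)
    (fun k a m => smul_assoc k a m)
    (fun a m n => smul_add a m n)
    (fun k a m => (smul_comm k a m).symm))

/-- Left multiplication by `a : A` on a left `A`-module, as a `K`-linear map. -/
def lsmulMap (a : A) : M →ₗ[K] M where
  toFun := fun m => a • m
  map_add' := fun x y => smul_add a x y
  map_smul' := fun k m => (smul_comm k a m).symm

/-- `a ↦ a • n` as a `K`-linear map `A → M`. -/
def smulBy (n : M) : A →ₗ[K] M where
  toFun := fun a => a • n
  map_add' := fun a b => add_smul a b n
  map_smul' := fun k a => smul_assoc k a n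

/-- `D : M → A ⊗ M` is a connection with respect to the universal differential
calculus. -/
def IsConnection (D : M →ₗ[K] A ⊗[K] M) : Prop :=
  (∀ m : M, actMap K A M (D m) = 0) ∧
  ∀ (a : A) (m : M),
    D (a • m) = LinearMap.rTensor M (LinearMap.mulLeft K a) (D m)
      + (1 : A) ⊗ₜ[K] (a • m) - a ⊗ₜ[K] m

/-- Flatness of a connection: `Σ 1 ⊗ m_A ⊗ m_M = Σ m_A ⊗ D(m_M)`. -/
def IsFlatConnection (D : M →ₗ[K] A ⊗[K] M) : Prop :=
  ∀ m : M, (1 : A) ⊗ₜ[K] (D m) = LinearMap.lTensor A D (D m)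

/-- The induced right operation `m·a := a m − Σ m_A a m_M`. -/
noncomputable def rop (D : M →ₗ[K] A ⊗[K] M) (m : M) (a : A) : M :=
  a • m - actMap K A M (LinearMap.rTensor M (LinearMap.mulRight K a) (D m))


@[simp]
lemma actMap_tmul (a : A) (m : M) : actMap K A M (a ⊗ₜ[K] m) = a • m := rfl

lemma actMap_rTensor_mulLeft (a : A) (x : A ⊗[K] M) :
    actMap K A M (LinearMap.rTensor M (LinearMap.mulLeft K a) x) = a • actMap K A M x := by
  induction x using TensorProduct.induction_on with
  | zero => simp only [map_zero, smul_zero]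
  | tmul c m => simp [mul_smul]
  | add x y hx hy => simp only [map_add, hx, hy, smul_add]

lemma rTensor_mulRight_rTensor_mulLeft {R B N : Type*} [CommSemiring R] [Semiring B]
    [Algebra R B] [AddCommMonoid N] [Module R N] (a b : B) (x : B ⊗[R] N) :
    LinearMap.rTensor N (LinearMap.mulRight R b) (LinearMap.rTensor N (LinearMap.mulLeft R a) x) =
      LinearMap.rTensor N (LinearMap.mulLeft R a)
        (LinearMap.rTensor N (LinearMap.mulRight R b) x) := by
  rw [← LinearMap.comp_apply, ← LinearMap.rTensor_comp, ← Module.End.mul_eq_comp,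
    ← (LinearMap.commute_mulLeft_right a b).eq, Module.End.mul_eq_comp, LinearMap.rTensor_comp,
    LinearMap.comp_apply]

theorem connection_right_operation_unital_and_commutes (D : M →ₗ[K] A ⊗[K] M)
    (hconn : IsConnection K A M D) :
    (∀ m : M, rop K A M D m 1 = m) ∧
    (∀ (a b : A) (m : M), rop K A M D (a • m) b = a • rop K A M D m b) := by
  obtain ⟨hactMap, hleibniz⟩ := hconn
  refine ⟨fun m => ?_, fun a b m => ?_⟩
  · simp [rop, LinearMap.mulRight_one, hactMap m]
  -- The correction `1 ⊗ a m - a ⊗ m` in the Leibniz rule contributes `b a m - a b m`,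
  -- which is exactly the defect between `b • (a • m)` and `a • (b • m)`.
  · simp only [rop, hleibniz a m, map_add, map_sub, LinearMap.rTensor_tmul,
      LinearMap.mulRight_apply, rTensor_mulRight_rTensor_mulLeft, actMap_rTensor_mulLeft,
      actMap_tmul, one_mul, mul_smul, smul_sub]
    abel
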